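/- Let M ≥ 1 be an integer and c > 0 a real constant. Define g : [1, ∞) → R by g(x) = [ M + 4M²(2M+1)·log(1 + (x−1)/(16M²(2M+1))) ] / [ (4x + 16M − 4)·exp( 2(x−1)c / (x + 4M − 1) ) ]. Then g is monotonically decreasing on [1, ∞), i.e., for all 1 ≤ x₁ ≤ x₂, g(x₂) ≤ g(x₁). -/

import Mathlib

/-!
Write `t = x - 1`. The exponent `2c t / (t + 4M)` increases with `t`, so it suffices that
`N(t) / (t + 4M)` decreases, where `N(t) = M + A log(1 + t / (4A))` with `A = 4M²(2M+1)`.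
Concavity of `log` gives `N(t₂) - N(t₁) ≤ A (t₂ - t₁) / (4A + t₁)`, and `log (1 + u) ≥ u / (1 + u)`
gives `N(t₁) ≥ A (t₁ + 4M) / (4A + t₁)`; together they say that beyond `t₁` the function `N` grows
no faster than the slope `N(t₁) / (t₁ + 4M)` of the chord from `(-4M, 0)` to `(t₁, N(t₁))`.
-/

open Real Set

theorem Real.log_sub_log_le_div {x y : ℝ} (hx : 0 < x) (hy : 0 < y) :
    log y - log x ≤ (y - x) / x := by
  rw [← log_div hy.ne' hx.ne', sub_div, div_self hx.ne']
  exact log_le_sub_one_of_pos (div_pos hy hx)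

theorem monotoneOn_div_add {d : ℝ} (hd : 0 < d) : MonotoneOn (fun t => t / (t + d)) (Ici 0) := by
  intro t₁ ht₁ t₂ ht₂ h
  simp only [mem_Ici] at ht₁ ht₂
  rw [div_le_div_iff₀ (by linarith) (by linarith)]
  nlinarith

theorem antitoneOn_add_mul_log_div {a b k d : ℝ} (ha : 0 < a) (hk : 0 < k) (hb : 0 ≤ b)
    (hd : 0 < d) (had : a * d ≤ b * k) :
    AntitoneOn (fun t => (b + a * log (1 + t / k)) / (t + d)) (Ici 0) := by
  intro t₁ ht₁ t₂ ht₂ h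
  simp only [mem_Ici] at ht₁ ht₂
  have hpos₁ : 0 < 1 + t₁ / k := by positivity
  have hpos₂ : 0 < 1 + t₂ / k := by positivity
  obtain ⟨q, hq, hqk⟩ : ∃ q, 0 ≤ q ∧ q * (k + t₁) = a :=
    ⟨a / (k + t₁), by positivity, div_mul_cancel₀ _ (by positivity)⟩
  have increment : a * log (1 + t₂ / k) - a * log (1 + t₁ / k) ≤ q * (t₂ - t₁) := by
    have hlog := log_sub_log_le_div hpos₁ hpos₂
    have hslope : (1 + t₂ / k - (1 + t₁ / k)) / (1 + t₁ / k) = (t₂ - t₁) / (k + t₁) := by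
      field_simp
      ring
    rw [hslope] at hlog
    calc a * log (1 + t₂ / k) - a * log (1 + t₁ / k)
        = a * (log (1 + t₂ / k) - log (1 + t₁ / k)) := by ring
      _ ≤ a * ((t₂ - t₁) / (k + t₁)) := mul_le_mul_of_nonneg_left hlog ha.le
      _ = q * (t₂ - t₁) := by rw [← hqk]; field_simp
  have secant : q * (t₁ + d) ≤ b + a * log (1 + t₁ / k) := by
    have hlog := one_sub_inv_le_log_of_pos hpos₁
    have hfrac : a * (1 - (1 + t₁ / k)⁻¹) = q * t₁ := by
      rw [← hqk]
      field_simp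
      ring
    have hqd : q * d ≤ b := by
      refine le_of_mul_le_mul_right ?_ (by positivity : 0 < k + t₁)
      nlinarith
    nlinarith [mul_le_mul_of_nonneg_left hlog ha.le]
  rw [div_le_div_iff₀ (by linarith) (by linarith)]
  nlinarith [mul_le_mul_of_nonneg_right increment (by linarith : 0 ≤ t₁ + d),
    mul_le_mul_of_nonneg_right secant (by linarith : 0 ≤ t₂ - t₁)]

/-- Monotonicity of the right-hand side of the ACCPM convergence criterion:
for `M ≥ 1` and `c > 0`, the function
`g(x) = (M + 4M²(2M+1) log(1 + (x-1)/(16M²(2M+1)))) / ((4x + 16M - 4) exp(2(x-1)c/(x+4M-1)))`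
is monotonically decreasing on `[1, ∞)`. -/
theorem accpm_criterion_rhs_antitone (M : ℕ) (hM : 1 ≤ M) (c : ℝ) (hc : 0 < c) :
    ∀ x₁ x₂ : ℝ, 1 ≤ x₁ → x₁ ≤ x₂ →
      ((M : ℝ) + 4 * (M : ℝ) ^ 2 * (2 * M + 1) *
            Real.log (1 + (x₂ - 1) / (16 * (M : ℝ) ^ 2 * (2 * M + 1)))) /
          ((4 * x₂ + 16 * M - 4) * Real.exp (2 * (x₂ - 1) * c / (x₂ + 4 * M - 1))) ≤
        ((M : ℝ) + 4 * (M : ℝ) ^ 2 * (2 * M + 1) *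
            Real.log (1 + (x₁ - 1) / (16 * (M : ℝ) ^ 2 * (2 * M + 1)))) /
          ((4 * x₁ + 16 * M - 4) * Real.exp (2 * (x₁ - 1) * c / (x₁ + 4 * M - 1))) := by
  intro x₁ x₂ hx₁ hx
  have hM₀ : (0 : ℝ) < M := by exact_mod_cast hM
  set A : ℝ := 4 * (M : ℝ) ^ 2 * (2 * M + 1)
  have hA : 0 < A := by positivity
  set F := fun t : ℝ => ((M : ℝ) + A * log (1 + t / (4 * A))) / (t + 4 * M)
  set θ := fun t : ℝ => t / (t + 4 * M)
  have hF : AntitoneOn F (Ici 0) :=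
    antitoneOn_add_mul_log_div hA (by positivity) hM₀.le (by positivity) (by linarith)
  have hθ : MonotoneOn θ (Ici 0) := monotoneOn_div_add (by positivity)
  have hform : ∀ x : ℝ, ((M : ℝ) + A * log (1 + (x - 1) / (16 * (M : ℝ) ^ 2 * (2 * M + 1)))) /
      ((4 * x + 16 * M - 4) * exp (2 * (x - 1) * c / (x + 4 * M - 1))) =
      F (x - 1) / (4 * exp (2 * c * θ (x - 1))) := by
    intro x
    simp only [F, θ, A]
    rw [div_div]
    ring_nf
  have ht₁ : x₁ - 1 ∈ Ici (0 : ℝ) := by rw [mem_Ici]; linarith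
  have ht₂ : x₂ - 1 ∈ Ici (0 : ℝ) := by rw [mem_Ici]; linarith
  have ht : x₁ - 1 ≤ x₂ - 1 := by linarith
  have hF₁ : 0 ≤ F (x₁ - 1) := by
    rw [mem_Ici] at ht₁
    have : 0 ≤ log (1 + (x₁ - 1) / (4 * A)) := log_nonneg (by bound)
    positivity
  rw [hform, hform]
  refine div_le_div₀ hF₁ (hF ht₁ ht₂ ht) (by positivity) ?_
  gcongr
  exact hθ ht₁ ht₂ ht
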